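/- arXiv:0908.4467 — 5 statements merged into one kernel-verified Lean document; each statement's English description precedes it below -/
import Mathlib

section
/- If there does not exist p in the simplex Δ with (Ãp)_1 = (Ãp)_2 = ... = (Ãp)_n, then there exists a vector c ∈ R^n with c_1 + ... + c_n = 0 and a δ > 0 such that cᵀÃx ≥ δ for all x ∈ Δ. -/
/-!
The image of the simplex under `Ã` is a compact convex set which, by assumption, misses the
line spanned by `(1, …, 1)`. Hahn–Banach strictly separates the two by a linear functional; being
bounded below on a line through the origin, it vanishes on `(1, …, 1)`, so it is `x ↦ c ⬝ᵥ x`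
with `∑ cᵢ = 0`, and it is bounded below by a positive constant on `Ã Δ`.
-/

open Matrix Finset

theorem LinearMap.apply_eq_zero_of_forall_lt_apply {E : Type*} [AddCommGroup E] [Module ℝ E]
    (f : E →ₗ[ℝ] ℝ) {P : Submodule ℝ E} {v : ℝ} (hv : ∀ p ∈ P, v < f p) :
    ∀ p ∈ P, f p = 0 := by
  intro p hp
  by_contra hfp
  have := hv (((v - 1) / f p) • p) (P.smul_mem _ hp)
  rw [map_smul, smul_eq_mul, div_mul_cancel₀ _ hfp] at this
  linarith

theorem exists_dual_pos_on_compact_of_disjoint_submodule {E : Type*} [TopologicalSpace E]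
    [AddCommGroup E] [Module ℝ E] [IsTopologicalAddGroup E] [ContinuousSMul ℝ E]
    [LocallyConvexSpace ℝ E] {K : Set E} {P : Submodule ℝ E} (hKconv : Convex ℝ K)
    (hKcpt : IsCompact K) (hP : IsClosed (P : Set E)) (hKP : Disjoint K P) :
    ∃ f : StrongDual ℝ E, (∀ p ∈ P, f p = 0) ∧ ∃ δ > 0, ∀ x ∈ K, δ ≤ f x := by
  obtain ⟨f, u, v, hfK, huv, hfP⟩ :=
    geometric_hahn_banach_compact_closed hKconv hKcpt P.convex hP hKP
  have hf0 := f.toLinearMap.apply_eq_zero_of_forall_lt_apply hfP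
  have hv : v < 0 := by simpa using hfP 0 P.zero_mem
  refine ⟨-f, fun p hp => neg_eq_zero.mpr (hf0 p hp), -u, by linarith, fun x hx => ?_⟩
  simpa using (hfK x hx).le

theorem stmt_1 (n : ℕ) (A : Matrix (Fin n) (Fin n) ℝ)
    (h : ¬ ∃ p : Fin n → ℝ, (∀ i, 0 ≤ p i) ∧ (∑ i, p i = 1) ∧
        (∀ i j, A.mulVec p i = A.mulVec p j)) :
    ∃ (c : Fin n → ℝ) (δ : ℝ), (∑ i, c i = 0) ∧ 0 < δ ∧
      ∀ x : Fin n → ℝ, (∀ i, 0 ≤ x i) → (∑ i, x i = 1) →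
        δ ≤ c ⬝ᵥ A.mulVec x := by
  set P := Submodule.span ℝ {(1 : Fin n → ℝ)}
  have hdisj : Disjoint (A.mulVecLin '' stdSimplex ℝ (Fin n)) P := by
    rw [Set.disjoint_left]
    rintro _ ⟨p, ⟨hp0, hp1⟩, rfl⟩ hpP
    obtain ⟨t, ht⟩ := Submodule.mem_span_singleton.mp hpP
    refine h ⟨p, hp0, hp1, fun i j => ?_⟩
    rw [mulVecLin_apply] at ht
    simp [← ht]
  obtain ⟨f, hfP, δ, hδ, hfK⟩ := exists_dual_pos_on_compact_of_disjoint_submodule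
    ((convex_stdSimplex ℝ (Fin n)).linear_image A.mulVecLin)
    ((isCompact_stdSimplex ℝ (Fin n)).image A.mulVecLin.continuous_of_finiteDimensional)
    P.closed_of_finiteDimensional hdisj
  set c := (dotProductEquiv ℝ (Fin n)).symm f.toLinearMap
  have hc : ∀ y, c ⬝ᵥ y = f y := fun y =>
    LinearMap.congr_fun ((dotProductEquiv ℝ (Fin n)).apply_symm_apply f.toLinearMap) y
  refine ⟨c, δ, ?_, hδ, fun x hx0 hx1 => ?_⟩
  · rw [← dotProduct_one, hc]
    exact hfP 1 (Submodule.mem_span_singleton_self 1)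
  · rw [hc]
    exact hfK _ ⟨x, ⟨hx0, hx1⟩, rfl⟩
end

section
/- Suppose the n×n matrix A satisfies a_{ij} + a_{ji} - a_{ii} - a_{jj} = (γ/2)(σ_i² + σ_j²) for all i ≠ j, where σ_1,...,σ_n > 0. Then A is conditionally negative definite if γ > 0 and conditionally positive definite if γ < 0; that is, for every nonzero y with y_1 + ... + y_n = 0 one has 2yᵀAy = -γ Σ_i σ_i² y_i². -/
/-!
A matrix of the form `(uᵢ + vⱼ)` has vanishing quadratic form on the hyperplane `∑ yᵢ = 0`.
With `cᵢ = γσᵢ²/2` the hypothesis says that `A + Aᵀ = (cᵢ + cⱼ) - diag(2cᵢ) + (aᵢᵢ + aⱼⱼ)`,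
so on that hyperplane `2 yᵀAy = yᵀ(A + Aᵀ)y = -2 ∑ cᵢ yᵢ²`.
-/

open Matrix Finset

namespace Matrix

variable {ι R : Type*} [Fintype ι] [CommRing R]

theorem dotProduct_of_add_mulVec_eq_zero {y : ι → R} (hy : ∑ i, y i = 0) (u v : ι → R) :
    y ⬝ᵥ of (fun i j => u i + v j) *ᵥ y = 0 := by
  simp only [dotProduct, mulVec, of_apply, add_mul, sum_add_distrib, mul_add, ← mul_sum,
    ← sum_mul, hy, mul_zero, zero_mul, add_zero, sum_const_zero]

theorem dotProduct_diagonal_mulVec [DecidableEq ι] (d y : ι → R) :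
    y ⬝ᵥ diagonal d *ᵥ y = ∑ i, d i * y i ^ 2 := by
  simp only [dotProduct, mulVec_diagonal]
  exact sum_congr rfl fun i _ => by ring

theorem two_mul_dotProduct_mulVec_of_sum_eq_zero [DecidableEq ι] {A : Matrix ι ι R}
    {c : ι → R} (hA : ∀ i j, i ≠ j → A i j + A j i - A i i - A j j = c i + c j)
    {y : ι → R} (hy : ∑ i, y i = 0) :
    2 * (y ⬝ᵥ A *ᵥ y) = -(2 * ∑ i, c i * y i ^ 2) := by
  have hsplit : A + Aᵀ = of (fun i j => c i + c j) - diagonal (fun i => 2 * c i)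
      + of (fun i j => A i i + A j j) := by
    ext i j
    by_cases hij : i = j
    · subst hij
      simp only [add_apply, transpose_apply, sub_apply, of_apply, diagonal_apply_eq]
      ring
    · simp [hij, ← hA i j hij]
  calc 2 * (y ⬝ᵥ A *ᵥ y) = y ⬝ᵥ (A + Aᵀ) *ᵥ y := by
        rw [add_mulVec, dotProduct_add, dotProduct_transpose_mulVec]; ring
    _ = -(2 * ∑ i, c i * y i ^ 2) := by
        rw [hsplit, add_mulVec, sub_mulVec, dotProduct_add, dotProduct_sub,
          dotProduct_of_add_mulVec_eq_zero hy, dotProduct_of_add_mulVec_eq_zero hy,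
          dotProduct_diagonal_mulVec, mul_sum]
        simp only [mul_assoc, zero_sub, add_zero]

end Matrix

theorem sum_mul_sq_pos {ι R : Type*} [Fintype ι] [Ring R] [LinearOrder R] [IsStrictOrderedRing R]
    {w y : ι → R} (hw : ∀ i, 0 < w i) (hy : y ≠ 0) :
    0 < ∑ i, w i * y i ^ 2 := by
  obtain ⟨i, hi⟩ := Function.ne_iff.mp hy
  exact sum_pos' (fun j _ => mul_nonneg (hw j).le (sq_nonneg _))
    ⟨i, mem_univ i, mul_pos (hw i) (sq_pos_of_ne_zero hi)⟩

theorem stmt_2 (n : ℕ) (A : Matrix (Fin n) (Fin n) ℝ) (σ : Fin n → ℝ) (γ : ℝ)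
    (hσ : ∀ i, 0 < σ i)
    (hA : ∀ i j, i ≠ j → A i j + A j i - A i i - A j j = γ / 2 * (σ i ^ 2 + σ j ^ 2)) :
    ∀ y : Fin n → ℝ, y ≠ 0 → ∑ i, y i = 0 →
      2 * (y ⬝ᵥ A.mulVec y) = -γ * ∑ i, σ i ^ 2 * y i ^ 2 ∧
      (0 < γ → y ⬝ᵥ A.mulVec y < 0) ∧
      (γ < 0 → 0 < y ⬝ᵥ A.mulVec y) := by
  intro y hy hsum
  have hquad : 2 * (y ⬝ᵥ A *ᵥ y) = -γ * ∑ i, σ i ^ 2 * y i ^ 2 := by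
    have := two_mul_dotProduct_mulVec_of_sum_eq_zero (c := fun i => γ / 2 * σ i ^ 2)
      (fun i j hij => by rw [hA i j hij]; ring) hsum
    rw [this, mul_sum, mul_sum, ← sum_neg_distrib]
    exact sum_congr rfl fun i _ => by ring
  have hpos : 0 < ∑ i, σ i ^ 2 * y i ^ 2 := sum_mul_sq_pos (fun i => pow_pos (hσ i) 2) hy
  refine ⟨hquad, fun hγ => ?_, fun hγ => ?_⟩ <;> nlinarith
end

section
/- Let Ã be a conditionally positive definite n×n matrix and p a point with p_1 + ... + p_n = 1, p not equal to any standard basis vector e_k, and (Ãp)_1 = ... = (Ãp)_n. Define h(x) = pᵀÃx - xᵀÃx - (1/2)Σ_j σ_j² x_j(1 - x_j) for x in the simplex Δ, where all σ_j > 0. Then there exists ε > 0 such that h(x) ≤ -ε for all x in the interior of Δ. -/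
open Matrix Finset

/-!
Since `Ã p` has equal coordinates and `p - x` sums to zero, `pᵀÃx - xᵀÃx = -(p - x)ᵀÃ(p - x)`
on the simplex, so `-h` is the sum of the quadratic form of `Ã` at `p - x` and the variance term
`½ ∑ σⱼ² xⱼ (1 - xⱼ)`. Both are nonnegative on the closed simplex; the first vanishes only at
`x = p`, where the second is positive because `p` is not a vertex. A continuous positive function
on the compact simplex is bounded below by some `ε > 0`.
-/

section

variable {ι R : Type*} [Fintype ι]

lemma dotProduct_eq_zero_of_sum_eq_zero [CommSemiring R] {y v : ι → R}
    (hv : ∀ i j, v i = v j) (hy : ∑ i, y i = 0) : y ⬝ᵥ v = 0 := by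
  cases isEmpty_or_nonempty ι with
  | inl _ => simp [dotProduct]
  | inr h =>
    obtain ⟨i₀⟩ := h
    rw [show v = fun _ => v i₀ from funext fun i => hv i i₀, dotProduct, ← Finset.sum_mul, hy,
      zero_mul]

lemma dotProduct_mulVec_sub_dotProduct_mulVec [CommRing R] {A : Matrix ι ι R} {p x : ι → R}
    (hp : ∀ i j, (A *ᵥ p) i = (A *ᵥ p) j) (hx : ∑ i, x i = ∑ i, p i) :
    p ⬝ᵥ A *ᵥ x - x ⬝ᵥ A *ᵥ x = -((p - x) ⬝ᵥ A *ᵥ (p - x)) := by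
  have h : (p - x) ⬝ᵥ A *ᵥ p = 0 :=
    dotProduct_eq_zero_of_sum_eq_zero hp (by simp [Finset.sum_sub_distrib, hx])
  rw [mulVec_sub, dotProduct_sub, h, sub_dotProduct]
  ring

end

section

variable {ι : Type*} [Fintype ι]

lemma exists_pos_lt_one_of_mem_stdSimplex [DecidableEq ι] {x : ι → ℝ} (hx : x ∈ stdSimplex ℝ ι)
    (hvert : ∀ k, x ≠ Pi.single k 1) : ∃ j, 0 < x j ∧ x j < 1 := by
  obtain ⟨k, hk⟩ : ∃ k, 0 < x k := by
    by_contra! h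
    have : ∑ i, x i = 0 := Finset.sum_eq_zero fun i _ => le_antisymm (h i) (hx.1 i)
    linarith [hx.2]
  refine ⟨k, hk, lt_of_le_of_ne (stdSimplex.le_one ⟨x, hx⟩ k) fun hk1 => hvert k ?_⟩
  funext j
  by_cases hjk : j = k
  · simp [hjk, hk1]
  · have : x j + x k ≤ ∑ i, x i := by
      rw [← Finset.sum_pair hjk]
      exact Finset.sum_le_univ_sum_of_nonneg hx.1
    have := hx.1 j
    simp only [Pi.single_apply, hjk, if_false]
    linarith [hx.2]

lemma sum_mul_mul_one_sub_nonneg {c x : ι → ℝ} (hc : ∀ j, 0 ≤ c j) (hx : x ∈ stdSimplex ℝ ι) :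
    0 ≤ ∑ j, c j * x j * (1 - x j) :=
  Finset.sum_nonneg fun j _ => mul_nonneg (mul_nonneg (hc j) (hx.1 j))
    (sub_nonneg.2 (stdSimplex.le_one ⟨x, hx⟩ j))

lemma sum_mul_mul_one_sub_pos [DecidableEq ι] {c x : ι → ℝ} (hc : ∀ j, 0 < c j)
    (hx : x ∈ stdSimplex ℝ ι) (hvert : ∀ k, x ≠ Pi.single k 1) :
    0 < ∑ j, c j * x j * (1 - x j) := by
  obtain ⟨j, hj0, hj1⟩ := exists_pos_lt_one_of_mem_stdSimplex hx hvert
  refine Finset.sum_pos' (fun i _ => ?_) ⟨j, Finset.mem_univ j, mul_pos (mul_pos (hc j) hj0) (sub_pos.2 hj1)⟩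
  exact mul_nonneg (mul_nonneg (hc i).le (hx.1 i)) (sub_nonneg.2 (stdSimplex.le_one ⟨x, hx⟩ i))

end

theorem stmt_4 (n : ℕ) (A : Matrix (Fin n) (Fin n) ℝ) (σ : Fin n → ℝ)
    (hσ : ∀ j, 0 < σ j)
    (hpos : ∀ y : Fin n → ℝ, y ≠ 0 → ∑ i, y i = 0 → 0 < y ⬝ᵥ A.mulVec y)
    (p : Fin n → ℝ) (hp1 : ∑ i, p i = 1)
    (hpv : ∀ k : Fin n, p ≠ Pi.single k 1)
    (hpe : ∀ i j, A.mulVec p i = A.mulVec p j) :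
    ∃ ε > 0, ∀ x : Fin n → ℝ, (∀ i, 0 < x i) → (∑ i, x i = 1) →
      p ⬝ᵥ A.mulVec x - x ⬝ᵥ A.mulVec x
        - (1 / 2) * ∑ j, σ j ^ 2 * x j * (1 - x j) ≤ -ε := by
  set F : (Fin n → ℝ) → ℝ := fun x =>
    (p - x) ⬝ᵥ A *ᵥ (p - x) + (1 / 2) * ∑ j, σ j ^ 2 * x j * (1 - x j)
  have hF : ∀ x ∈ stdSimplex ℝ (Fin n), 0 < F x := by
    intro x hx
    by_cases hxp : x = p
    · subst hxp
      have := sum_mul_mul_one_sub_pos (fun j => pow_pos (hσ j) 2) hx hpv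
      simp only [F, sub_self, mulVec_zero, dotProduct_zero, zero_add]
      positivity
    · have hQ := hpos (p - x) (sub_ne_zero.2 (Ne.symm hxp)) (by simp [sum_sub_distrib, hp1, hx.2])
      have hV := sum_mul_mul_one_sub_nonneg (fun j => sq_nonneg (σ j)) hx
      simp only [F]
      positivity
  obtain ⟨ε, hε, hεF⟩ :=
    (isCompact_stdSimplex ℝ (Fin n)).exists_forall_le' (by fun_prop : Continuous F).continuousOn hF
  refine ⟨ε, hε, fun x hx hx1 => ?_⟩
  have hεx : ε ≤ F x := hεF x ⟨fun i => (hx i).le, hx1⟩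
  simp only [F] at hεx
  rw [dotProduct_mulVec_sub_dotProduct_mulVec hpe (hx1.trans hp1.symm)]
  linarith
end

section
/- Let n = 3 and let Ã be a conditionally positive definite 3×3 matrix whose first column has all entries equal (ã_{11} = ã_{21} = ã_{31}). Then ã_{12} < ã_{22} and ã_{13} < ã_{33}, and moreover ã_{22} > ã_{32} or ã_{33} > ã_{23}; consequently strategy 2 or strategy 3 is a strict Nash equilibrium of Ã (i.e., ã_{kk} > ã_{jk} for all j ≠ k, for k = 2 or k = 3). -/
/-! Testing the quadratic form on `y = e_j - e_i` gives `a_ij + a_ji < a_ii + a_jj` for `i ≠ j`.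
With a constant first column, the pairs `(0, 1)` and `(0, 2)` give `a_01 < a_11` and `a_02 < a_22`,
and the pair `(1, 2)` says `(a_11 - a_21) + (a_22 - a_12) > 0`, so one summand is positive. -/

namespace Matrix

variable {n R : Type*} [Fintype n] [DecidableEq n]

def IsCondPosDef [CommRing R] [PartialOrder R] (A : Matrix n n R) : Prop :=
  ∀ y : n → R, y ≠ 0 → ∑ i, y i = 0 → 0 < y ⬝ᵥ A *ᵥ y

theorem single_sub_single_dotProduct_mulVec [CommRing R] (A : Matrix n n R) (i j : n) :
    (Pi.single j 1 - Pi.single i 1) ⬝ᵥ A *ᵥ (Pi.single j 1 - Pi.single i 1) =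
      A i i - A i j - A j i + A j j := by
  simp only [mulVec_sub, mulVec_single_one, sub_dotProduct, single_one_dotProduct, Pi.sub_apply,
    col_apply]
  ring

theorem IsCondPosDef.add_lt_add_diag [CommRing R] [PartialOrder R] [IsOrderedRing R]
    [Nontrivial R] {A : Matrix n n R} (hA : A.IsCondPosDef) {i j : n} (hij : i ≠ j) :
    A i j + A j i < A i i + A j j := by
  have hy : (Pi.single j 1 - Pi.single i 1 : n → R) ≠ 0 := by
    intro h
    simpa [Pi.single_apply, hij] using congrFun h j
  have hsum : ∑ k, (Pi.single j 1 - Pi.single i 1 : n → R) k = 0 := by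
    simp [Finset.sum_sub_distrib]
  have hq := hA _ hy hsum
  rw [single_sub_single_dotProduct_mulVec] at hq
  exact sub_pos.mp (by convert hq using 1; ring)

end Matrix

open Matrix Finset

theorem stmt_6 (A : Matrix (Fin 3) (Fin 3) ℝ)
    (hpos : ∀ y : Fin 3 → ℝ, y ≠ 0 → ∑ i, y i = 0 → 0 < y ⬝ᵥ A.mulVec y)
    (hcol : A 0 0 = A 1 0 ∧ A 0 0 = A 2 0) :
    A 0 1 < A 1 1 ∧ A 0 2 < A 2 2 ∧
    (A 1 1 > A 2 1 ∨ A 2 2 > A 1 2) ∧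
    ((∀ j ≠ (1 : Fin 3), A 1 1 > A j 1) ∨ (∀ j ≠ (2 : Fin 3), A 2 2 > A j 2)) := by
  have hA : A.IsCondPosDef := hpos
  have h01 := hA.add_lt_add_diag (i := 0) (j := 1) (by decide)
  have h02 := hA.add_lt_add_diag (i := 0) (j := 2) (by decide)
  have h12 := hA.add_lt_add_diag (i := 1) (j := 2) (by decide)
  have h11 : A 0 1 < A 1 1 := by linarith [hcol.1]
  have h22 : A 0 2 < A 2 2 := by linarith [hcol.2]
  have hdiag : A 1 1 > A 2 1 ∨ A 2 2 > A 1 2 := by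
    by_contra! h
    linarith [h.1, h.2]
  refine ⟨h11, h22, hdiag, hdiag.imp (fun h j hj => ?_) (fun h j hj => ?_)⟩ <;>
    fin_cases j <;> first | exact absurd rfl hj | assumption
end

section
/- Let Ã be an n×n matrix with ã_{ij} + ã_{ji} - ã_{ii} - ã_{jj} = (γ/2)(σ_i² + σ_j²) for all i ≠ j, γ > 0, σ_i > 0. If p is in the interior of the simplex with (Ãp)₁ = ... = (Ãp)ₙ, then p is the unique interior Nash equilibrium of Ã. -/
/-!
Since `Ãp` is constant and `p` lies in the simplex, every mixed strategy earns the same payoff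
`pᵀÃp` against `p`, so `p` is a Nash equilibrium. An interior equilibrium `p'` is a best response
to itself with full support, so `Ãp'` is constant as well; then `y = p' - p` sums to zero and
`Ãy` is constant, whence `yᵀÃy = 0`. The hypothesis on `Ã` says that `Ã + Ãᵀ` is
`c 1ᵀ + 1 cᵀ - diag(γσ²)` for some `c`, so on vectors summing to zero
`2 yᵀÃy = -γ Σ σᵢ² yᵢ²`, which forces `y = 0`.
-/

open Matrix Finset

variable {ι : Type*}

theorem add_transpose_eq_of_add_sub_diag_eq [DecidableEq ι] {A : Matrix ι ι ℝ} {e : ι → ℝ}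
    (hA : ∀ i j, i ≠ j → A i j + A j i - A i i - A j j = e i + e j) :
    A + Aᵀ = vecMulVec (fun i => A i i + e i) 1 + vecMulVec 1 (fun i => A i i + e i)
      - diagonal (2 • e) := by
  ext i j
  by_cases hij : i = j
  · subst hij; simp; ring
  · simp [vecMulVec, hij]; linarith [hA i j hij]

variable [Fintype ι]

theorem dotProduct_eq_sum_mul_of_forall_eq {q v : ι → ℝ} {c : ℝ} (hv : ∀ i, v i = c) :
    q ⬝ᵥ v = (∑ i, q i) * c := by
  simp [dotProduct, hv, Finset.sum_mul]

theorem apply_le_of_forall_dotProduct_le [DecidableEq ι] {v : ι → ℝ} {c : ℝ}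
    (h : ∀ q : ι → ℝ, (∀ i, 0 ≤ q i) → ∑ i, q i = 1 → q ⬝ᵥ v ≤ c) (i : ι) : v i ≤ c := by
  simpa [single_dotProduct] using
    h (Pi.single i 1) (fun j => by by_cases hj : j = i <;> simp [hj]) (by simp)

theorem apply_eq_dotProduct_of_le {p v : ι → ℝ} (hp : ∀ i, 0 < p i) (hp1 : ∑ i, p i = 1)
    (hv : ∀ i, v i ≤ p ⬝ᵥ v) (i : ι) : v i = p ⬝ᵥ v := by
  by_contra hne
  have hlt : p ⬝ᵥ v < (∑ j, p j) * (p ⬝ᵥ v) := by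
    rw [Finset.sum_mul]
    exact Finset.sum_lt_sum (fun j _ => mul_le_mul_of_nonneg_left (hv j) (hp j).le)
      ⟨i, mem_univ i, mul_lt_mul_of_pos_left (lt_of_le_of_ne (hv i) hne) (hp i)⟩
  rw [hp1, one_mul] at hlt
  exact lt_irrefl _ hlt

section ConditionallyNegativeDefinite

variable [DecidableEq ι] {A : Matrix ι ι ℝ} {c d y : ι → ℝ}

theorem two_mul_dotProduct_mulVec_self
    (hA : A + Aᵀ = vecMulVec c 1 + vecMulVec 1 c - diagonal d) (hy : ∑ i, y i = 0) :
    2 * (y ⬝ᵥ A *ᵥ y) = -∑ i, d i * y i ^ 2 := by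
  have hsymm : y ⬝ᵥ Aᵀ *ᵥ y = y ⬝ᵥ A *ᵥ y := by
    rw [dotProduct_mulVec, vecMul_transpose, dotProduct_comm]
  have h1y : (1 : ι → ℝ) ⬝ᵥ y = 0 := by rw [dotProduct_comm, dotProduct_one, hy]
  calc 2 * (y ⬝ᵥ A *ᵥ y) = y ⬝ᵥ (A + Aᵀ) *ᵥ y := by
        rw [add_mulVec, dotProduct_add, hsymm]; ring
    _ = -∑ i, d i * y i ^ 2 := by
        rw [hA, sub_mulVec, add_mulVec, dotProduct_sub, dotProduct_add,
          dotProduct_mulVec y (vecMulVec c 1), dotProduct_mulVec y (vecMulVec 1 c),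
          vecMul_vecMulVec, vecMul_vecMulVec, smul_dotProduct, h1y, dotProduct_one, hy]
        simp [dotProduct, mulVec_diagonal, sq, mul_left_comm]

theorem eq_zero_of_dotProduct_mulVec_self_eq_zero
    (hA : A + Aᵀ = vecMulVec c 1 + vecMulVec 1 c - diagonal d) (hd : ∀ i, 0 < d i)
    (hy : ∑ i, y i = 0) (h : y ⬝ᵥ A *ᵥ y = 0) : y = 0 := by
  have hsum : ∑ i, d i * y i ^ 2 = 0 := by linarith [two_mul_dotProduct_mulVec_self hA hy]
  have hterm := (Finset.sum_eq_zero_iff_of_nonneg fun i _ => by have := hd i; positivity).1 hsum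
  funext i
  simpa [(hd i).ne'] using hterm i (mem_univ i)

end ConditionallyNegativeDefinite

theorem stmt_12_general (n : ℕ) (Atil : Matrix (Fin n) (Fin n) ℝ) (σ : Fin n → ℝ) (γ : ℝ)
    (hσ : ∀ i, 0 < σ i) (hγ : 0 < γ)
    (hA : ∀ i j, i ≠ j →
      Atil i j + Atil j i - Atil i i - Atil j j = γ / 2 * (σ i ^ 2 + σ j ^ 2))
    (p : Fin n → ℝ) (hp1 : ∑ i, p i = 1)
    (hpe : ∀ i j, Atil.mulVec p i = Atil.mulVec p j) :
    (∀ q : Fin n → ℝ, (∀ i, 0 ≤ q i) → ∑ i, q i = 1 →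
      q ⬝ᵥ Atil.mulVec p ≤ p ⬝ᵥ Atil.mulVec p) ∧
    (∀ p' : Fin n → ℝ, (∀ i, 0 < p' i) → (∑ i, p' i = 1) →
      (∀ q : Fin n → ℝ, (∀ i, 0 ≤ q i) → ∑ i, q i = 1 →
        q ⬝ᵥ Atil.mulVec p' ≤ p' ⬝ᵥ Atil.mulVec p') → p' = p) := by
  have hAp : ∀ i, (Atil *ᵥ p) i = p ⬝ᵥ Atil *ᵥ p := fun i => by
    rw [dotProduct_eq_sum_mul_of_forall_eq fun j => hpe j i, hp1, one_mul]
  refine ⟨fun q _ hq1 => by rw [dotProduct_eq_sum_mul_of_forall_eq hAp, hq1, one_mul], ?_⟩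
  intro p' hp'0 hp'1 hnash
  have hAp' : ∀ i, (Atil *ᵥ p') i = p' ⬝ᵥ Atil *ᵥ p' :=
    apply_eq_dotProduct_of_le hp'0 hp'1 (apply_le_of_forall_dotProduct_le hnash)
  have hsum : ∑ i, (p' - p) i = 0 := by simp [Finset.sum_sub_distrib, hp1, hp'1]
  have hAy : ∀ i, (Atil *ᵥ (p' - p)) i = p' ⬝ᵥ Atil *ᵥ p' - p ⬝ᵥ Atil *ᵥ p := fun i => by
    rw [mulVec_sub, Pi.sub_apply, hAp', hAp]
  have hyAy : (p' - p) ⬝ᵥ Atil *ᵥ (p' - p) = 0 := by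
    rw [dotProduct_eq_sum_mul_of_forall_eq hAy, hsum, zero_mul]
  have hsymm := add_transpose_eq_of_add_sub_diag_eq (e := fun i => γ / 2 * σ i ^ 2)
    fun i j hij => by rw [hA i j hij, mul_add]
  have hd : ∀ i, 0 < (2 • fun i => γ / 2 * σ i ^ 2) i := fun i => by
    have := hσ i; simp only [Pi.smul_apply, nsmul_eq_mul]; positivity
  exact sub_eq_zero.1 (eq_zero_of_dotProduct_mulVec_self_eq_zero hsymm hd hsum hyAy)

theorem stmt_12 (n : ℕ) (Atil : Matrix (Fin n) (Fin n) ℝ) (σ : Fin n → ℝ) (γ : ℝ)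
    (hσ : ∀ i, 0 < σ i) (hγ : 0 < γ)
    (hA : ∀ i j, i ≠ j →
      Atil i j + Atil j i - Atil i i - Atil j j = γ / 2 * (σ i ^ 2 + σ j ^ 2))
    (p : Fin n → ℝ) (hp0 : ∀ i, 0 < p i) (hp1 : ∑ i, p i = 1)
    (hpe : ∀ i j, Atil.mulVec p i = Atil.mulVec p j) :
    (∀ q : Fin n → ℝ, (∀ i, 0 ≤ q i) → ∑ i, q i = 1 →
      q ⬝ᵥ Atil.mulVec p ≤ p ⬝ᵥ Atil.mulVec p) ∧
    (∀ p' : Fin n → ℝ, (∀ i, 0 < p' i) → (∑ i, p' i = 1) →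
      (∀ q : Fin n → ℝ, (∀ i, 0 ≤ q i) → ∑ i, q i = 1 →
        q ⬝ᵥ Atil.mulVec p' ≤ p' ⬝ᵥ Atil.mulVec p') → p' = p) :=
  stmt_12_general n Atil σ γ hσ hγ hA p hp1 hpe
end
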